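/- In the ρ-model with ρ > 1, if a graph on n vertices has a dynamo of size k and the all-white state is first reached at round m, then n is at most the total number of vertices reachable, bounded via e < k²(2ρ/(ρ-1))^m; in particular, if there is a family of graphs with dynamos of size O(1), then the number of rounds needed to whiten an n-vertex graph of that family is Ω(log n). -/
import Mathlib


open Finset

/-- The ρ-model update: a vertex with w white and b black neighbors becomes white
at the next round iff w > ρ·b. -/
noncomputable def rhoUpd {V : Type*} [Fintype V] [DecidableEq V] (ρ : ℝ)
    (G : SimpleGraph V) [DecidableRel G.Adj] (W : Finset V) : Finset V :=
  open scoped Classical in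
  Finset.univ.filter fun v =>
    ρ * (((G.neighborFinset v) \ W).card : ℝ) < (((G.neighborFinset v) ∩ W).card : ℝ)

/-- Sᵣ = T₁ ∪ ... ∪ Tᵣ, where Tᵢ = Wᵢ ∩ Wᵢ₋₁. -/
noncomputable def rhoS {V : Type*} [Fintype V] [DecidableEq V] (ρ : ℝ)
    (G : SimpleGraph V) [DecidableRel G.Adj] (W₀ : Finset V) (r : ℕ) : Finset V :=
  (Finset.range r).biUnion fun i =>
    (rhoUpd ρ G)^[i + 1] W₀ ∩ (rhoUpd ρ G)^[i] W₀

/-- The number of edges with exactly one endpoint in S. -/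
def cutCard {V : Type*} [Fintype V] [DecidableEq V] (G : SimpleGraph V)
    [DecidableRel G.Adj] (S : Finset V) : ℕ :=
  ∑ v ∈ S, ((G.neighborFinset v) \ S).card

set_option linter.unusedSectionVars false

section RhoHelpers
variable {V : Type*} [Fintype V] [DecidableEq V] {ρ : ℝ}
  {G : SimpleGraph V} [DecidableRel G.Adj]

lemma mem_rhoUpd {W : Finset V} {v : V} :
    v ∈ rhoUpd ρ G W ↔
      ρ * (((G.neighborFinset v) \ W).card : ℝ) < (((G.neighborFinset v) ∩ W).card : ℝ) := by
  classical
  simp [rhoUpd]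

lemma cutCard_eq (S : Finset V) :
    cutCard G S = ∑ x ∈ univ \ S, ((G.neighborFinset x) ∩ S).card := by
  classical
  unfold cutCard
  have h1 : ∀ v : V, (G.neighborFinset v) \ S = (univ \ S).filter (fun x => G.Adj v x) := by
    intro v; ext x; simp [SimpleGraph.mem_neighborFinset, and_comm]
  have h2 : ∀ x : V, (G.neighborFinset x) ∩ S = S.filter (fun v => G.Adj x v) := by
    intro x; ext v; simp [SimpleGraph.mem_neighborFinset, and_comm]
  simp_rw [h1, h2, Finset.card_filter]
  rw [Finset.sum_comm]
  apply Finset.sum_congr rfl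
  intro x _
  apply Finset.sum_congr rfl
  intro v _
  simp only [G.adj_comm]

lemma cut_sum_le (S : Finset V) {A : Finset V} (hA : A ⊆ univ \ S) :
    ∑ v ∈ A, ((G.neighborFinset v) ∩ S).card ≤ cutCard G S := by
  rw [cutCard_eq]
  exact Finset.sum_le_sum_of_subset hA

lemma rhoS_succ (W₀ : Finset V) (r : ℕ) :
    rhoS ρ G W₀ (r + 1)
      = rhoS ρ G W₀ r ∪ ((rhoUpd ρ G)^[r + 1] W₀ ∩ (rhoUpd ρ G)^[r] W₀) := by
  unfold rhoS
  rw [Finset.range_add_one, Finset.biUnion_insert, union_comm]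

lemma term_subset_rhoS (W₀ : Finset V) {j r : ℕ} (h : j < r) :
    (rhoUpd ρ G)^[j + 1] W₀ ∩ (rhoUpd ρ G)^[j] W₀ ⊆ rhoS ρ G W₀ r := by
  intro x hx
  unfold rhoS
  exact Finset.mem_biUnion.2 ⟨j, Finset.mem_range.2 h, hx⟩

lemma rhoS_mono (W₀ : Finset V) {r s : ℕ} (h : r ≤ s) :
    rhoS ρ G W₀ r ⊆ rhoS ρ G W₀ s := by
  intro x hx
  unfold rhoS at *
  obtain ⟨j, hj, hxj⟩ := Finset.mem_biUnion.1 hx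
  exact Finset.mem_biUnion.2 ⟨j, Finset.mem_range.2 (lt_of_lt_of_le (Finset.mem_range.1 hj) h), hxj⟩

lemma rho_arith (hρ : 1 < ρ) {a b c d : ℕ} (h1 : ρ * b < a) (h2 : ρ * d < c)
    (h3 : a + b = c + d) :
    d < a ∧ (ρ - 1) * ((b : ℝ) + d) ≤ 2 * ((a : ℝ) - d) := by
  have hρ0 : (0:ℝ) < ρ := by linarith
  have h3' : (a:ℝ) + b = (c:ℝ) + d := by exact_mod_cast h3
  have hb0 : (0:ℝ) ≤ b := Nat.cast_nonneg b
  have hd0 : (0:ℝ) ≤ d := Nat.cast_nonneg d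
  have h4 : ρ * (ρ * d) < ρ * c := mul_lt_mul_of_pos_left h2 hρ0
  have hda : ρ * d < a := by nlinarith
  have hd : (d:ℝ) < a := by nlinarith
  refine ⟨by exact_mod_cast hd, ?_⟩
  nlinarith [mul_lt_mul_of_pos_left h1 (show (0:ℝ) < ρ - 1 by linarith),
    mul_lt_mul_of_pos_left hda (show (0:ℝ) < ρ + 1 by linarith)]

lemma card_inter_lb (N A B : Finset V) :
    (N ∩ A).card ≤ (N ∩ (B ∩ A)).card + (N \ B).card := by
  have hsub : N ∩ A ⊆ (N ∩ (B ∩ A)) ∪ (N \ B) := by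
    intro x hx
    simp only [mem_inter, mem_union, mem_sdiff] at *
    by_cases hB : x ∈ B <;> tauto
  calc (N ∩ A).card ≤ ((N ∩ (B ∩ A)) ∪ (N \ B)).card := card_le_card hsub
    _ ≤ _ := card_union_le _ _

lemma card_sdiff_ub (N A B : Finset V) :
    (N \ (B ∩ A)).card ≤ (N \ B).card + (N \ A).card := by
  have hsub : N \ (B ∩ A) ⊆ (N \ B) ∪ (N \ A) := by
    intro x hx
    simp only [mem_inter, mem_union, mem_sdiff] at *
    tauto
  calc (N \ (B ∩ A)).card ≤ ((N \ B) ∪ (N \ A)).card := card_le_card hsub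
    _ ≤ _ := card_union_le _ _

lemma key_vertex (hρ : 1 < ρ) (W₀ : Finset V) (j : ℕ) {v : V}
    (hv : v ∈ (rhoUpd ρ G)^[j + 2] W₀ ∩ (rhoUpd ρ G)^[j + 1] W₀) :
    1 ≤ ((G.neighborFinset v) ∩ rhoS ρ G W₀ (j + 1)).card ∧
    (ρ - 1) * (((G.neighborFinset v) \ rhoS ρ G W₀ (j + 2)).card : ℝ)
      ≤ 2 * (((G.neighborFinset v) ∩ rhoS ρ G W₀ (j + 1)).card : ℝ) := by
  classical
  obtain ⟨hv2, hv1⟩ := Finset.mem_inter.1 hv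
  set N := G.neighborFinset v with hN
  set Wj := (rhoUpd ρ G)^[j] W₀ with hWj
  set Wj1 := (rhoUpd ρ G)^[j + 1] W₀ with hWj1
  have e2 : (rhoUpd ρ G)^[j + 2] W₀ = rhoUpd ρ G Wj1 :=
    Function.iterate_succ_apply' (rhoUpd ρ G) (j + 1) W₀
  have e1 : Wj1 = rhoUpd ρ G Wj :=
    Function.iterate_succ_apply' (rhoUpd ρ G) j W₀
  have h2 : ρ * ((N \ Wj1).card : ℝ) < ((N ∩ Wj1).card : ℝ) := by
    rw [e2] at hv2; exact mem_rhoUpd.1 hv2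
  have h1 : ρ * ((N \ Wj).card : ℝ) < ((N ∩ Wj).card : ℝ) := by
    rw [e1] at hv1; exact mem_rhoUpd.1 hv1
  have h3 : (N ∩ Wj).card + (N \ Wj).card = (N ∩ Wj1).card + (N \ Wj1).card := by
    rw [Finset.card_inter_add_card_sdiff, Finset.card_inter_add_card_sdiff]
  obtain ⟨hda, hineq⟩ := rho_arith hρ h1 h2 h3
  have hT1 : Wj1 ∩ Wj ⊆ rhoS ρ G W₀ (j + 1) := term_subset_rhoS W₀ (Nat.lt_succ_self j)
  have hT2 : Wj1 ∩ Wj ⊆ rhoS ρ G W₀ (j + 2) := hT1.trans (rhoS_mono W₀ (by omega))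
  have hlb : (N ∩ Wj).card ≤ (N ∩ rhoS ρ G W₀ (j + 1)).card + (N \ Wj1).card := by
    calc (N ∩ Wj).card ≤ (N ∩ (Wj1 ∩ Wj)).card + (N \ Wj1).card := card_inter_lb N Wj Wj1
      _ ≤ _ := by gcongr
  have hub : (N \ rhoS ρ G W₀ (j + 2)).card ≤ (N \ Wj1).card + (N \ Wj).card := by
    calc (N \ rhoS ρ G W₀ (j + 2)).card ≤ (N \ (Wj1 ∩ Wj)).card :=
          card_le_card (sdiff_subset_sdiff Subset.rfl hT2)
      _ ≤ _ := card_sdiff_ub N Wj Wj1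
  refine ⟨by omega, ?_⟩
  have hub2 : (N \ rhoS ρ G W₀ (j + 2)).card ≤ (N \ Wj).card + (N \ Wj1).card := by omega
  have hub' : ((N \ rhoS ρ G W₀ (j + 2)).card : ℝ) ≤ ((N \ Wj).card : ℝ) + ((N \ Wj1).card : ℝ) := by
    exact_mod_cast hub2
  have hlb' : ((N ∩ Wj).card : ℝ) - ((N \ Wj1).card : ℝ) ≤ ((N ∩ rhoS ρ G W₀ (j + 1)).card : ℝ) := by
    have h : ((N ∩ Wj).card : ℝ) ≤ ((N ∩ rhoS ρ G W₀ (j + 1)).card : ℝ) + ((N \ Wj1).card : ℝ) := by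
      exact_mod_cast hlb
    linarith
  have hρ1 : (0:ℝ) ≤ ρ - 1 := by linarith
  calc (ρ - 1) * (((N \ rhoS ρ G W₀ (j + 2)).card : ℝ))
      ≤ (ρ - 1) * (((N \ Wj).card : ℝ) + ((N \ Wj1).card : ℝ)) :=
        mul_le_mul_of_nonneg_left hub' hρ1
    _ ≤ 2 * (((N ∩ Wj).card : ℝ) - ((N \ Wj1).card : ℝ)) := hineq
    _ ≤ 2 * (((N ∩ rhoS ρ G W₀ (j + 1)).card : ℝ)) := by linarith

lemma rhoS_succ_eq (W₀ : Finset V) (r : ℕ) :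
    rhoS ρ G W₀ (r + 1)
      = rhoS ρ G W₀ r ∪
        (((rhoUpd ρ G)^[r + 1] W₀ ∩ (rhoUpd ρ G)^[r] W₀) \ rhoS ρ G W₀ r) := by
  rw [rhoS_succ, Finset.union_sdiff_self_eq_union]

lemma cut_step (hρ : 1 < ρ) (W₀ : Finset V) (j : ℕ) :
    (cutCard G (rhoS ρ G W₀ (j + 2)) : ℝ)
      ≤ (ρ + 1) / (ρ - 1) * (cutCard G (rhoS ρ G W₀ (j + 1)) : ℝ) := by
  classical
  set S1 := rhoS ρ G W₀ (j + 1) with hS1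
  set S2 := rhoS ρ G W₀ (j + 2) with hS2def
  set T := (rhoUpd ρ G)^[j + 2] W₀ ∩ (rhoUpd ρ G)^[j + 1] W₀ with hT
  have hS2 : S2 = S1 ∪ (T \ S1) := rhoS_succ_eq W₀ (j + 1)
  have hS12 : S1 ⊆ S2 := rhoS_mono W₀ (by omega)
  have hdisj : Disjoint S1 (T \ S1) := Finset.disjoint_sdiff
  have hsplit : cutCard G S2
      = ∑ v ∈ S1, ((G.neighborFinset v) \ S2).card
        + ∑ v ∈ T \ S1, ((G.neighborFinset v) \ S2).card := by
    unfold cutCard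
    rw [hS2]
    exact Finset.sum_union hdisj
  have hfirst : ∑ v ∈ S1, ((G.neighborFinset v) \ S2).card ≤ cutCard G S1 := by
    unfold cutCard
    apply Finset.sum_le_sum
    intro v _
    exact card_le_card (sdiff_subset_sdiff Subset.rfl hS12)
  -- second sum, real bound
  have hkey : ∀ v ∈ T \ S1,
      (ρ - 1) * (((G.neighborFinset v) \ S2).card : ℝ)
        ≤ 2 * (((G.neighborFinset v) ∩ S1).card : ℝ) := by
    intro v hv
    exact (key_vertex hρ W₀ j (Finset.mem_sdiff.1 hv).1).2
  have hsum2 : (ρ - 1) * ∑ v ∈ T \ S1, (((G.neighborFinset v) \ S2).card : ℝ)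
      ≤ 2 * (cutCard G S1 : ℝ) := by
    rw [Finset.mul_sum]
    calc ∑ v ∈ T \ S1, (ρ - 1) * (((G.neighborFinset v) \ S2).card : ℝ)
        ≤ ∑ v ∈ T \ S1, 2 * (((G.neighborFinset v) ∩ S1).card : ℝ) :=
          Finset.sum_le_sum hkey
      _ = 2 * ∑ v ∈ T \ S1, (((G.neighborFinset v) ∩ S1).card : ℝ) := by
          rw [Finset.mul_sum]
      _ ≤ 2 * (cutCard G S1 : ℝ) := by
          have h := cut_sum_le (G := G) S1 (A := T \ S1) ?_
          · have h' : (∑ v ∈ T \ S1, ((G.neighborFinset v) ∩ S1).card : ℝ)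
                ≤ (cutCard G S1 : ℝ) := by exact_mod_cast h
            linarith
          · intro x hx
            simp only [Finset.mem_sdiff, Finset.mem_univ, true_and] at *
            exact hx.2
  have hρ1 : (0:ℝ) < ρ - 1 := by linarith
  rw [div_mul_eq_mul_div, le_div_iff₀ hρ1]
  have hsplit' : (cutCard G S2 : ℝ)
      ≤ (cutCard G S1 : ℝ) + ∑ v ∈ T \ S1, (((G.neighborFinset v) \ S2).card : ℝ) := by
    rw [hsplit]
    push_cast
    have : (∑ v ∈ S1, (((G.neighborFinset v) \ S2).card : ℝ)) ≤ (cutCard G S1 : ℝ) := by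
      exact_mod_cast hfirst
    linarith
  nlinarith [mul_le_mul_of_nonneg_left hsplit' (le_of_lt hρ1)]

lemma card_step (hρ : 1 < ρ) (W₀ : Finset V) (j : ℕ) :
    (rhoS ρ G W₀ (j + 2)).card ≤ (rhoS ρ G W₀ (j + 1)).card + cutCard G (rhoS ρ G W₀ (j + 1)) := by
  classical
  set S1 := rhoS ρ G W₀ (j + 1) with hS1
  set T := (rhoUpd ρ G)^[j + 2] W₀ ∩ (rhoUpd ρ G)^[j + 1] W₀ with hT
  have hS2 : rhoS ρ G W₀ (j + 2) = S1 ∪ (T \ S1) := rhoS_succ_eq W₀ (j + 1)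
  have hc : (T \ S1).card ≤ cutCard G S1 := by
    calc (T \ S1).card = ∑ v ∈ T \ S1, 1 := by rw [Finset.card_eq_sum_ones]
      _ ≤ ∑ v ∈ T \ S1, ((G.neighborFinset v) ∩ S1).card := by
          apply Finset.sum_le_sum
          intro v hv
          exact (key_vertex hρ W₀ j (Finset.mem_sdiff.1 hv).1).1
      _ ≤ cutCard G S1 := by
          apply cut_sum_le
          intro x hx
          simp only [Finset.mem_sdiff, Finset.mem_univ, true_and] at *
          exact hx.2
  calc (rhoS ρ G W₀ (j + 2)).card ≤ S1.card + (T \ S1).card := by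
        rw [hS2]; exact Finset.card_union_le _ _
    _ ≤ S1.card + cutCard G S1 := by omega

lemma rhoS_one (W₀ : Finset V) : rhoS ρ G W₀ 1 = rhoUpd ρ G W₀ ∩ W₀ := by
  unfold rhoS
  simp

lemma card_rhoS_one (W₀ : Finset V) : (rhoS ρ G W₀ 1).card ≤ W₀.card := by
  rw [rhoS_one]
  exact card_le_card inter_subset_right

lemma cut_rhoS_one (hρ : 1 < ρ) (W₀ : Finset V) :
    (cutCard G (rhoS ρ G W₀ 1) : ℝ) ≤ (W₀.card : ℝ) ^ 2 * ((ρ + 1) / ρ) := by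
  classical
  have hρ0 : (0:ℝ) < ρ := by linarith
  set S := rhoS ρ G W₀ 1 with hS
  have hBnd : ∀ v ∈ S, (((G.neighborFinset v) \ S).card : ℝ) ≤ (W₀.card : ℝ) * ((ρ + 1) / ρ) := by
    intro v hv
    rw [hS, rhoS_one] at hv
    obtain ⟨hv1, _⟩ := Finset.mem_inter.1 hv
    have h1 : ρ * (((G.neighborFinset v) \ W₀).card : ℝ) < (((G.neighborFinset v) ∩ W₀).card : ℝ) :=
      mem_rhoUpd.1 hv1
    have ha : (((G.neighborFinset v) ∩ W₀).card : ℝ) ≤ (W₀.card : ℝ) := by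
      exact_mod_cast card_le_card (inter_subset_right (s₁ := G.neighborFinset v))
    have hcard : (((G.neighborFinset v) \ S).card : ℝ) ≤ ((G.neighborFinset v).card : ℝ) := by
      exact_mod_cast card_le_card (sdiff_subset)
    have hsum : ((G.neighborFinset v).card : ℝ)
        = (((G.neighborFinset v) ∩ W₀).card : ℝ) + (((G.neighborFinset v) \ W₀).card : ℝ) := by
      exact_mod_cast (Finset.card_inter_add_card_sdiff (G.neighborFinset v) W₀).symm
    have hb0 : (0:ℝ) ≤ (((G.neighborFinset v) \ W₀).card : ℝ) := Nat.cast_nonneg _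
    rw [← mul_div_assoc, le_div_iff₀ hρ0]
    nlinarith [mul_le_mul_of_nonneg_right hcard (le_of_lt hρ0),
      mul_le_mul_of_nonneg_right ha (le_of_lt hρ0)]
  calc (cutCard G S : ℝ) = ∑ v ∈ S, (((G.neighborFinset v) \ S).card : ℝ) := by
        unfold cutCard; push_cast; ring
    _ ≤ ∑ v ∈ S, (W₀.card : ℝ) * ((ρ + 1) / ρ) := Finset.sum_le_sum hBnd
    _ = (S.card : ℝ) * ((W₀.card : ℝ) * ((ρ + 1) / ρ)) := by
        rw [Finset.sum_const, nsmul_eq_mul]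
    _ ≤ (W₀.card : ℝ) * ((W₀.card : ℝ) * ((ρ + 1) / ρ)) := by
        apply mul_le_mul_of_nonneg_right
        · exact_mod_cast card_rhoS_one W₀
        · positivity
    _ = (W₀.card : ℝ) ^ 2 * ((ρ + 1) / ρ) := by ring

lemma cover (hρ : 1 < ρ) (W₀ : Finset V) (j : ℕ)
    (hall : (rhoUpd ρ G)^[j + 1] W₀ = Finset.univ) :
    Fintype.card V ≤ (rhoS ρ G W₀ (j + 1)).card + cutCard G (rhoS ρ G W₀ (j + 1)) := by
  classical
  set S := rhoS ρ G W₀ (j + 1) with hS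
  have hsub : (rhoUpd ρ G)^[j] W₀ ⊆ S := by
    intro u hu
    apply term_subset_rhoS W₀ (Nat.lt_succ_self j)
    rw [Finset.mem_inter, hall]
    exact ⟨Finset.mem_univ u, hu⟩
  have hone : ∀ v ∈ univ \ S, 1 ≤ ((G.neighborFinset v) ∩ S).card := by
    intro v _
    have hv : v ∈ (rhoUpd ρ G)^[j + 1] W₀ := by rw [hall]; exact Finset.mem_univ v
    rw [Function.iterate_succ_apply'] at hv
    have h1 := mem_rhoUpd.1 hv
    have ha : 0 < (((G.neighborFinset v) ∩ (rhoUpd ρ G)^[j] W₀).card : ℝ) := by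
      have : (0:ℝ) ≤ ρ * (((G.neighborFinset v) \ (rhoUpd ρ G)^[j] W₀).card : ℝ) := by
        positivity
      linarith
    have ha' : 1 ≤ ((G.neighborFinset v) ∩ (rhoUpd ρ G)^[j] W₀).card := by
      exact_mod_cast ha
    calc 1 ≤ ((G.neighborFinset v) ∩ (rhoUpd ρ G)^[j] W₀).card := ha'
      _ ≤ ((G.neighborFinset v) ∩ S).card :=
          card_le_card (Finset.inter_subset_inter Subset.rfl hsub)
  have hcount : (univ \ S).card ≤ cutCard G S := by
    calc (univ \ S).card = ∑ v ∈ univ \ S, 1 := by rw [Finset.card_eq_sum_ones]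
      _ ≤ ∑ v ∈ univ \ S, ((G.neighborFinset v) ∩ S).card := Finset.sum_le_sum hone
      _ ≤ cutCard G S := cut_sum_le S Subset.rfl
  have hcards : (univ \ S).card = Fintype.card V - S.card := by
    rw [Finset.card_sdiff_of_subset (Finset.subset_univ S), Finset.card_univ]
  have hle : S.card ≤ Fintype.card V := by
    rw [← Finset.card_univ]; exact card_le_card (Finset.subset_univ S)
  omega

lemma geom_bound (hρ : 1 < ρ) (n : ℕ) :
    (ρ + 1) / ρ * ∑ i ∈ Finset.range n, ((ρ + 1) / (ρ - 1)) ^ i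
      ≤ (2 * ρ / (ρ - 1)) ^ n - 1 := by
  have hρ0 : (0:ℝ) < ρ := by linarith
  have hρ1 : (0:ℝ) < ρ - 1 := by linarith
  set q : ℝ := (ρ + 1) / (ρ - 1) with hq
  set Q : ℝ := 2 * ρ / (ρ - 1) with hQ
  have hq0 : 0 ≤ q := by positivity
  have hQq : Q = q + 1 := by
    rw [hQ, hq]
    field_simp
    ring
  have hle : (ρ + 1) / ρ ≤ q := by
    apply div_le_div_of_nonneg_left (by linarith) hρ1 (by linarith)
  induction n with
  | zero => simp
  | succ n ih =>
    rw [Finset.sum_range_succ, mul_add, pow_succ]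
    have hqQ : q ^ n ≤ Q ^ n := by
      apply pow_le_pow_left₀ hq0
      rw [hQq]; linarith
    have hQn0 : (0:ℝ) ≤ Q ^ n := by positivity
    have h1 : (ρ + 1) / ρ * q ^ n ≤ q * Q ^ n := by
      have hqn0 : (0:ℝ) ≤ q ^ n := by positivity
      calc (ρ + 1) / ρ * q ^ n ≤ q * q ^ n := mul_le_mul_of_nonneg_right hle hqn0
        _ ≤ q * Q ^ n := mul_le_mul_of_nonneg_left hqQ hq0
    have h2 : Q ^ n * Q = q * Q ^ n + Q ^ n := by rw [hQq]; ring
    linarith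

end RhoHelpers

/-- In the ρ-model with ρ > 1 on a connected graph with n vertices, if a dynamo
of size k first whitens the whole graph at round m, then
n - 1 ≤ e < k²·(2ρ/(ρ-1))^m; in particular a family of graphs with dynamos of
bounded size needs Ω(log n) rounds. -/
theorem rho_log_rounds {V : Type*} [Fintype V] [DecidableEq V] (ρ : ℝ)
    (hirr : Irrational ρ) (hρ : 1 < ρ) (G : SimpleGraph V) [DecidableRel G.Adj]
    (hconn : G.Connected) (hiso : ∀ v : V, 0 < G.degree v) (W₀ : Finset V)
    (k m : ℕ) (hk : W₀.card = k)
    (hall : (rhoUpd ρ G)^[m] W₀ = Finset.univ)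
    (hfirst : ∀ j < m, (rhoUpd ρ G)^[j] W₀ ≠ Finset.univ) :
    (Fintype.card V : ℝ) - 1 < (k : ℝ) ^ 2 * (2 * ρ / (ρ - 1)) ^ m := by
  classical
  have hρ0 : (0:ℝ) < ρ := by linarith
  have hρ1 : (0:ℝ) < ρ - 1 := by linarith
  have hk0 : (0:ℝ) ≤ k := Nat.cast_nonneg k
  set q : ℝ := (ρ + 1) / (ρ - 1) with hq
  set Q : ℝ := 2 * ρ / (ρ - 1) with hQ
  have hq0 : (0:ℝ) ≤ q := by positivity
  set A : ℝ := (k : ℝ) ^ 2 * ((ρ + 1) / ρ) with hA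
  have hA0 : 0 ≤ A := by positivity
  have hkk : (k:ℝ) - 1 < (k:ℝ) ^ 2 := by nlinarith [sq_nonneg (2 * (k:ℝ) - 1)]
  cases m with
  | zero =>
    simp only [Function.iterate_zero_apply] at hall
    have : Fintype.card V = k := by
      rw [← hk, hall, Finset.card_univ]
    rw [this, pow_zero, mul_one]
    exact hkk
  | succ j =>
    -- bound on cut cards
    have hcut : ∀ i : ℕ, (cutCard G (rhoS ρ G W₀ (i + 1)) : ℝ) ≤ A * q ^ i := by
      intro i
      induction i with
      | zero =>
        have h := cut_rhoS_one (G := G) hρ W₀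
        rw [hk] at h
        rw [hA, pow_zero, mul_one]
        exact h
      | succ i ih =>
        calc (cutCard G (rhoS ρ G W₀ (i + 2)) : ℝ)
            ≤ q * (cutCard G (rhoS ρ G W₀ (i + 1)) : ℝ) := cut_step hρ W₀ i
          _ ≤ q * (A * q ^ i) := mul_le_mul_of_nonneg_left ih hq0
          _ = A * q ^ (i + 1) := by ring
    -- bound on card of S
    have hcard : ∀ i : ℕ, ((rhoS ρ G W₀ (i + 1)).card : ℝ)
        ≤ (k : ℝ) + A * ∑ l ∈ Finset.range i, q ^ l := by
      intro i
      induction i with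
      | zero =>
        simp only [Finset.range_zero, Finset.sum_empty, mul_zero, add_zero]
        rw [← hk]
        exact_mod_cast card_rhoS_one W₀
      | succ i ih =>
        have h1 : ((rhoS ρ G W₀ (i + 2)).card : ℝ)
            ≤ ((rhoS ρ G W₀ (i + 1)).card : ℝ) + (cutCard G (rhoS ρ G W₀ (i + 1)) : ℝ) := by
          exact_mod_cast card_step hρ W₀ i
        rw [Finset.sum_range_succ, mul_add]
        calc ((rhoS ρ G W₀ (i + 2)).card : ℝ)
            ≤ ((rhoS ρ G W₀ (i + 1)).card : ℝ) + (cutCard G (rhoS ρ G W₀ (i + 1)) : ℝ) := h1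
          _ ≤ ((k : ℝ) + A * ∑ l ∈ Finset.range i, q ^ l) + A * q ^ i := by
              have := hcut i; linarith
          _ = (k : ℝ) + (A * ∑ l ∈ Finset.range i, q ^ l + A * q ^ i) := by ring
    -- cover
    have hcover : (Fintype.card V : ℝ)
        ≤ ((rhoS ρ G W₀ (j + 1)).card : ℝ) + (cutCard G (rhoS ρ G W₀ (j + 1)) : ℝ) := by
      exact_mod_cast cover hρ W₀ j hall
    have hn : (Fintype.card V : ℝ) ≤ (k : ℝ) + A * ∑ l ∈ Finset.range (j + 1), q ^ l := by
      rw [Finset.sum_range_succ, mul_add]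
      calc (Fintype.card V : ℝ)
          ≤ ((rhoS ρ G W₀ (j + 1)).card : ℝ) + (cutCard G (rhoS ρ G W₀ (j + 1)) : ℝ) := hcover
        _ ≤ ((k : ℝ) + A * ∑ l ∈ Finset.range j, q ^ l) + A * q ^ j := by
            have := hcard j; have := hcut j; linarith
        _ = (k : ℝ) + (A * ∑ l ∈ Finset.range j, q ^ l + A * q ^ j) := by ring
    have hgeom : A * ∑ l ∈ Finset.range (j + 1), q ^ l ≤ (k : ℝ) ^ 2 * (Q ^ (j + 1) - 1) := by
      rw [hA, mul_assoc]
      apply mul_le_mul_of_nonneg_left _ (by positivity)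
      exact geom_bound hρ (j + 1)
    have hk2 : (0:ℝ) ≤ (k:ℝ) ^ 2 := by positivity
    nlinarith [hn, hgeom, hkk]
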